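/- Let p be a prime, s ≥ 1 and n ≥ 1. Then, with the convention ξ_0 = 1, the congruence ξ_{ns} ≡ −ζ_s · ξ_{(n−1)s}^{p^s} holds in F_p[ξ_1, ξ_2, …] modulo the ideal generated by {ζ_j : j ≥ 1, j ≠ s}. -/

import Mathlib

/-!
Reindexed and with `ξ_0 = 1`, the recursion defining `ζ` says `∑_{j=0}^m ζ_j ξ_{m-j}^{p^j} = 0`
for every `m ≥ 1`. Modulo the ideal generated by the `ζ_j` with `j ≥ 1`, `j ≠ s`, only the terms
`j = 0` and `j = s` survive, so `ξ_m ≡ -ζ_s ξ_{m-s}^{p^s}` for all `m ≥ s`; take `m = ns`.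
-/

open MvPolynomial

/-- The conjugates `ζ_s ∈ F_p[ξ_1, ξ_2, …]` (with `ξ_r = X r`): `ζ_0 = 1` and
`ζ_s = −(ζ_{s−1} ξ_1^{p^{s−1}} + ζ_{s−2} ξ_2^{p^{s−2}} + ⋯ + ζ_1 ξ_{s−1}^p + ξ_s)`. -/
noncomputable def zeta (p : ℕ) : ℕ → MvPolynomial ℕ (ZMod p)
  | 0 => 1
  | (s+1) => - ∑ i ∈ Finset.range (s+1), zeta p (s - i) * (X (i+1))^(p^(s-i))
  decreasing_by omega

/-- `ξ_m` with the convention `ξ_0 = 1`. -/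
noncomputable def xiE (p m : ℕ) : MvPolynomial ℕ (ZMod p) :=
  if m = 0 then 1 else X m

/-- The ideal of `F_p[ξ_1, ξ_2, …]` generated by `{ζ_j : j ≥ 1, j ≠ s}`. -/
noncomputable def zetaIdeal (p s : ℕ) : Ideal (MvPolynomial ℕ (ZMod p)) :=
  Ideal.span {x | ∃ j, 1 ≤ j ∧ j ≠ s ∧ x = zeta p j}

lemma xiE_zero (p : ℕ) : xiE p 0 = 1 := if_pos rfl

lemma xiE_of_ne_zero {p m : ℕ} (hm : m ≠ 0) : xiE p m = X m := if_neg hm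

lemma zeta_mem_zetaIdeal (p : ℕ) {s j : ℕ} (hj : 1 ≤ j) (hjs : j ≠ s) :
    zeta p j ∈ zetaIdeal p s :=
  Ideal.subset_span ⟨j, hj, hjs, rfl⟩

lemma sum_zeta_mul_xiE_pow_eq_zero (p : ℕ) {m : ℕ} (hm : 1 ≤ m) :
    ∑ j ∈ Finset.range (m + 1), zeta p j * xiE p (m - j) ^ p ^ j = 0 := by
  obtain ⟨t, rfl⟩ : ∃ t, m = t + 1 := ⟨m - 1, by omega⟩
  have hrec : ∑ j ∈ Finset.range (t + 1), zeta p j * xiE p (t + 1 - j) ^ p ^ j =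
      -zeta p (t + 1) := by
    rw [zeta, neg_neg, ← Finset.sum_range_reflect]
    refine Finset.sum_congr rfl fun i hi => ?_
    have hi : i < t + 1 := Finset.mem_range.mp hi
    rw [show t + 1 - (t + 1 - 1 - i) = i + 1 by omega, xiE_of_ne_zero (Nat.succ_ne_zero i),
      show t + 1 - 1 - i = t - i by omega]
  rw [Finset.sum_range_succ, hrec, Nat.sub_self, xiE_zero, one_pow, mul_one, neg_add_cancel]

lemma xiE_add_zeta_mul_mem_zetaIdeal (p : ℕ) {s m : ℕ} (hs : 1 ≤ s) (hsm : s ≤ m) :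
    xiE p m + zeta p s * xiE p (m - s) ^ p ^ s ∈ zetaIdeal p s := by
  set f := Ideal.Quotient.mk (zetaIdeal p s)
  have hsum := congrArg f (sum_zeta_mul_xiE_pow_eq_zero p (hs.trans hsm))
  rw [map_sum, map_zero, Finset.sum_eq_add_of_mem 0 s (Finset.mem_range.mpr (by omega))
    (Finset.mem_range.mpr (by omega)) (by omega)] at hsum
  · rwa [zeta, Nat.sub_zero, pow_zero, pow_one, one_mul, ← map_add,
      Ideal.Quotient.eq_zero_iff_mem] at hsum
  · rintro j - ⟨hj0, hjs⟩
    rw [map_mul, Ideal.Quotient.eq_zero_iff_mem.mpr (zeta_mem_zetaIdeal p (by omega) hjs),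
      zero_mul]

theorem xi_ns_congr_general (p : ℕ) (s n : ℕ) (hs : 1 ≤ s) (hn : 1 ≤ n) :
    xiE p (n * s) - (- zeta p s * (xiE p ((n - 1) * s)) ^ (p ^ s)) ∈ zetaIdeal p s := by
  rw [neg_mul, sub_neg_eq_add, Nat.sub_one_mul]
  exact xiE_add_zeta_mul_mem_zetaIdeal p hs (Nat.le_mul_of_pos_left s hn)

/-- For a prime `p`, `s ≥ 1` and `n ≥ 1`, with the convention `ξ_0 = 1`, the
congruence `ξ_{ns} ≡ −ζ_s ξ_{(n−1)s}^{p^s}` holds in `F_p[ξ_1, ξ_2, …]` modulo the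
ideal generated by `{ζ_j : j ≥ 1, j ≠ s}`. -/
theorem xi_ns_congr (p : ℕ) (hp : p.Prime) (s n : ℕ) (hs : 1 ≤ s) (hn : 1 ≤ n) :
    xiE p (n * s) - (- zeta p s * (xiE p ((n - 1) * s)) ^ (p ^ s)) ∈ zetaIdeal p s :=
  xi_ns_congr_general p s n hs hn
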